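/- Let π be a sum-indecomposable pattern of length j ≥ 3, let c_k be the number of π-avoiding ascent sequences of length k and w_k the number of π-avoiding weak ascent sequences of length k. Then c_{k²+2k} ≥ w_k^k for all k ≥ 1. -/

import Mathlib

/-!
Sum-indecomposability makes avoidance of `π` stable under stacking: if `u` and `v` avoid `π` and
every entry of `u` is at most every entry of `v`, an occurrence of `π` in `u ++ v` meeting both
parts would split `π` into a prefix and a suffix whose entries are all larger. Hence
`C = 0101⋯01 W̃₁⋯W̃ₖ` avoids `π`: the prefix takes only two values while `j ≥ 3`, and each `W̃_h`
is a translate of an avoider lying weakly above everything before it.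

`C` is an ascent sequence because the prefix contributes `k` ascents, more than the maximum of
any weak ascent sequence of length `k`, and each `W_h` contributes at least `N_h = max W_h`
ascents, which pays for the shift of the following block. Since `W ↦ C` is injective,
`w_k ^ k ≤ c_{k²+2k}`.
-/

open Filter Topology

/-- Number of ascents in a sequence (list) of naturals. -/
def asc (s : List ℕ) : ℕ :=
  ((s.zip s.tail).filter (fun p => p.1 < p.2)).length

/-- `s` is an ascent sequence: first entry `0`, and each later entry is at most
one more than the number of ascents of the preceding prefix. -/
def IsAscentSeq (s : List ℕ) : Prop :=
  (0 < s.length → s.getD 0 0 = 0) ∧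
  ∀ i, 0 < i → i < s.length → s.getD i 0 ≤ asc (s.take i) + 1

/-- `s` is a weak ascent sequence: every entry is at most the number of ascents. -/
def IsWeakAscentSeq (s : List ℕ) : Prop :=
  ∀ x ∈ s, x ≤ asc s

/-- `s` contains the pattern `p`: some subsequence of `s` is order-isomorphic
(including equalities) to `p`. -/
def ContainsPattern (s p : List ℕ) : Prop :=
  ∃ idx : Fin p.length → ℕ, StrictMono idx ∧ (∀ a, idx a < s.length) ∧
    ∀ a b : Fin p.length, p.get a < p.get b ↔ s.getD (idx a) 0 < s.getD (idx b) 0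

def AvoidsPattern (s p : List ℕ) : Prop := ¬ ContainsPattern s p

/-- A pattern of length `j` is a permutation of `0,…,j-1`. -/
def IsPattern (p : List ℕ) : Prop := List.Perm p (List.range p.length)

/-- Sum-indecomposable: no proper prefix whose entries are all smaller than
all entries of the complementary suffix. -/
def SumIndecomposable (p : List ℕ) : Prop :=
  ¬ ∃ i, 0 < i ∧ i < p.length ∧ ∀ x ∈ p.take i, ∀ y ∈ p.drop i, x < y

/-- Number of `p`-avoiding ascent sequences of length `k`. -/
noncomputable def ascentAvoidCount (p : List ℕ) (k : ℕ) : ℕ :=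
  {s : List ℕ | s.length = k ∧ IsAscentSeq s ∧ AvoidsPattern s p}.ncard

/-- Number of `p`-avoiding weak ascent sequences of length `k`. -/
noncomputable def weakAvoidCount (p : List ℕ) (k : ℕ) : ℕ :=
  {s : List ℕ | s.length = k ∧ IsWeakAscentSeq s ∧ AvoidsPattern s p}.ncard

def listMax (s : List ℕ) : ℕ := s.foldr max 0
def listMin (s : List ℕ) : ℕ := s.foldr min (listMax s)

/-- Reverse-complement map: `m j = max + min - n (k+1-j)`. -/
def revComp (s : List ℕ) : List ℕ :=
  s.reverse.map (fun x => listMax s + listMin s - x)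

/-- Occurrence of pattern 000: three equal entries. -/
def Contains000 (s : List ℕ) : Prop :=
  ∃ a b c, a < b ∧ b < c ∧ c < s.length ∧
    s.getD a 0 = s.getD b 0 ∧ s.getD b 0 = s.getD c 0

/-- Occurrence of pattern 100: `n i₁ > n i₂ = n i₃`. -/
def Contains100 (s : List ℕ) : Prop :=
  ∃ a b c, a < b ∧ b < c ∧ c < s.length ∧
    s.getD b 0 < s.getD a 0 ∧ s.getD b 0 = s.getD c 0

/-- Occurrence of pattern 110: `n i₁ = n i₂ > n i₃`. -/
def Contains110 (s : List ℕ) : Prop :=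
  ∃ a b c, a < b ∧ b < c ∧ c < s.length ∧
    s.getD a 0 = s.getD b 0 ∧ s.getD c 0 < s.getD b 0

/-- Occurrence of pattern 120: `n i₂ > n i₁ > n i₃`. -/
def Contains120 (s : List ℕ) : Prop :=
  ∃ a b c, a < b ∧ b < c ∧ c < s.length ∧
    s.getD a 0 < s.getD b 0 ∧ s.getD c 0 < s.getD a 0

/-- Occurrence of pattern 201: `n i₁ > n i₃ > n i₂`. -/
def Contains201 (s : List ℕ) : Prop :=
  ∃ a b c, a < b ∧ b < c ∧ c < s.length ∧
    s.getD c 0 < s.getD a 0 ∧ s.getD b 0 < s.getD c 0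

/-- Occurrence of pattern 012: `n i₁ < n i₂ < n i₃`. -/
def Contains012 (s : List ℕ) : Prop :=
  ∃ a b c, a < b ∧ b < c ∧ c < s.length ∧
    s.getD a 0 < s.getD b 0 ∧ s.getD b 0 < s.getD c 0

/-- Occurrence of pattern 011: `n i₁ < n i₂ = n i₃`. -/
def Contains011 (s : List ℕ) : Prop :=
  ∃ a b c, a < b ∧ b < c ∧ c < s.length ∧
    s.getD a 0 < s.getD b 0 ∧ s.getD b 0 = s.getD c 0

/-- Occurrence of pattern 021: `n i₁ < n i₃ < n i₂`. -/
def Contains021 (s : List ℕ) : Prop :=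
  ∃ a b c, a < b ∧ b < c ∧ c < s.length ∧
    s.getD a 0 < s.getD c 0 ∧ s.getD c 0 < s.getD b 0

/-- Occurrence of pattern 102: `n i₂ < n i₁ < n i₃`. -/
def Contains102 (s : List ℕ) : Prop :=
  ∃ a b c, a < b ∧ b < c ∧ c < s.length ∧
    s.getD b 0 < s.getD a 0 ∧ s.getD a 0 < s.getD c 0

/-- The construction `C = 0101⋯01 W̃₁⋯W̃ₖ` from weak ascent sequences. -/
def buildC (k : ℕ) (W : Fin k → List ℕ) : List ℕ :=
  (List.replicate k ([0,1] : List ℕ)).flatten ++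
    (List.ofFn (fun h : Fin k =>
      (W h).map (fun x =>
        x + 1 + ∑ j ∈ Finset.univ.filter (fun j => j < h), listMax (W j)))).flatten

lemma asc_cons_cons (x y : ℕ) (t : List ℕ) :
    asc (x :: y :: t) = (if x < y then 1 else 0) + asc (y :: t) := by
  simp only [asc, List.zip, List.tail_cons, List.zipWith_cons_cons, List.filter_cons]
  by_cases h : x < y <;> simp [h, Nat.add_comm]

lemma asc_le_asc_cons (x : ℕ) (t : List ℕ) : asc t ≤ asc (x :: t) := by
  cases t with
  | nil => exact le_rfl
  | cons y t => rw [asc_cons_cons]; omega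

lemma asc_add_asc_le_asc_append (u v : List ℕ) : asc u + asc v ≤ asc (u ++ v) := by
  induction u with
  | nil => simp [asc]
  | cons x t ih =>
    cases t with
    | nil => simpa [asc] using asc_le_asc_cons x v
    | cons y t =>
      rw [List.cons_append, List.cons_append, asc_cons_cons, asc_cons_cons, ← List.cons_append]
      omega

lemma asc_lt_length {s : List ℕ} (hs : s ≠ []) : asc s < s.length := by
  have hfilter := List.length_filter_le (fun p : ℕ × ℕ => decide (p.1 < p.2)) (s.zip s.tail)
  have hpos : 0 < s.length := List.length_pos_iff.mpr hs
  simp only [asc, List.length_zip, List.length_tail] at hfilter ⊢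
  omega

lemma asc_take_le (s : List ℕ) (i : ℕ) : asc (s.take i) ≤ i := by
  by_cases h : s.take i = []
  · simp [h, asc]
  · have := asc_lt_length h
    have := List.length_take_le i s
    omega

lemma asc_le_asc_take_append {u r : List ℕ} {i : ℕ} (hi : u.length ≤ i) :
    asc u ≤ asc ((u ++ r).take i) := by
  rw [List.take_append, List.take_of_length_le hi]
  exact le_of_add_le_left (asc_add_asc_le_asc_append _ _)

lemma asc_map_add (c : ℕ) (s : List ℕ) : asc (s.map (· + c)) = asc s := by
  induction s with
  | nil => rfl
  | cons x t ih =>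
    cases t with
    | nil => rfl
    | cons y t =>
      simp only [List.map_cons] at ih ⊢
      rw [asc_cons_cons, asc_cons_cons, ih]
      simp

lemma le_listMax {x : ℕ} {s : List ℕ} (h : x ∈ s) : x ≤ listMax s := by
  induction s with
  | nil => simp at h
  | cons y t ih =>
    rcases List.mem_cons.mp h with rfl | h
    · exact le_max_left _ _
    · exact (ih h).trans (le_max_right _ _)

lemma listMax_le {B : ℕ} {s : List ℕ} (h : ∀ x ∈ s, x ≤ B) : listMax s ≤ B := by
  induction s with
  | nil => exact Nat.zero_le _
  | cons y t ih =>
    exact max_le (h y List.mem_cons_self) (ih fun x hx => h x (List.mem_cons_of_mem _ hx))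

lemma IsWeakAscentSeq.listMax_lt_length {s : List ℕ} (hs : IsWeakAscentSeq s) (hne : s ≠ []) :
    listMax s < s.length :=
  (listMax_le hs).trans_lt (asc_lt_length hne)

lemma List.getD_mem {α : Type*} {s : List α} {i : ℕ} {d : α} (h : i < s.length) :
    s.getD i d ∈ s := by
  rw [List.getD_eq_getElem _ _ h]
  exact List.getElem_mem _

def altPrefix (k : ℕ) : List ℕ := (List.replicate k [0, 1]).flatten

lemma altPrefix_succ (k : ℕ) : altPrefix (k + 1) = 0 :: 1 :: altPrefix k := rfl

lemma length_altPrefix (k : ℕ) : (altPrefix k).length = 2 * k := by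
  simp [altPrefix, List.length_flatten, List.sum_replicate, mul_comm]

lemma le_one_of_mem_altPrefix {k x : ℕ} (h : x ∈ altPrefix k) : x ≤ 1 := by
  simp only [altPrefix, List.mem_flatten, List.mem_replicate] at h
  obtain ⟨l, ⟨_, rfl⟩, hx⟩ := h
  simp only [List.mem_cons, List.not_mem_nil, or_false] at hx
  omega

lemma le_asc_altPrefix (k : ℕ) : k ≤ asc (altPrefix k) := by
  induction k with
  | zero => omega
  | succ k ih =>
    rw [altPrefix_succ, asc_cons_cons, if_pos zero_lt_one]
    have := asc_le_asc_cons 1 (altPrefix k)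
    omega

def shiftBlocks : ℕ → List (List ℕ) → List ℕ
  | _, [] => []
  | c, w :: ws => w.map (· + c) ++ shiftBlocks (c + listMax w) ws

lemma length_shiftBlocks (c : ℕ) (ws : List (List ℕ)) :
    (shiftBlocks c ws).length = (ws.map List.length).sum := by
  induction ws generalizing c with
  | nil => rfl
  | cons w t ih => simp [shiftBlocks, ih]

lemma le_of_mem_shiftBlocks {c y : ℕ} {ws : List (List ℕ)} (h : y ∈ shiftBlocks c ws) :
    c ≤ y := by
  induction ws generalizing c with
  | nil => simp [shiftBlocks] at h
  | cons w t ih =>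
    rcases List.mem_append.mp h with h | h
    · obtain ⟨x, _, rfl⟩ := List.mem_map.mp h
      omega
    · have := ih h
      omega

lemma shiftBlocks_injective {m : ℕ} : ∀ (ws ws' : List (List ℕ)) (c : ℕ),
    ws.length = ws'.length → (∀ w ∈ ws, w.length = m) → (∀ w ∈ ws', w.length = m) →
    shiftBlocks c ws = shiftBlocks c ws' → ws = ws'
  | [], [], _, _, _, _, _ => rfl
  | w :: t, w' :: t', c, hl, hw, hw', heq => by
    have hlen : (w.map (· + c)).length = (w'.map (· + c)).length := by
      simp [hw w List.mem_cons_self, hw' w' List.mem_cons_self]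
    obtain ⟨hhead, htail⟩ := List.append_inj heq hlen
    obtain rfl : w = w' := List.map_injective_iff.mpr (add_left_injective c) hhead
    rw [shiftBlocks_injective t t' (c + listMax w) (by simpa using hl)
      (fun x hx => hw x (List.mem_cons_of_mem _ hx))
      (fun x hx => hw' x (List.mem_cons_of_mem _ hx)) htail]

lemma sum_filter_lt_succ {k : ℕ} (f : Fin (k + 1) → ℕ) (h : Fin k) :
    ∑ j ∈ Finset.univ.filter (fun j => j < h.succ), f j
      = f 0 + ∑ j ∈ Finset.univ.filter (fun j => j < h), f j.succ := by
  rw [Finset.sum_filter, Finset.sum_filter, Fin.sum_univ_succ]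
  simp [Fin.succ_pos]

lemma flatten_ofFn_map_add_eq_shiftBlocks (k : ℕ) (W : Fin k → List ℕ) (c : ℕ) :
    (List.ofFn fun h : Fin k =>
      (W h).map fun x =>
        x + c + ∑ j ∈ Finset.univ.filter (fun j => j < h), listMax (W j)).flatten
      = shiftBlocks c (List.ofFn W) := by
  induction k generalizing c with
  | zero => simp [shiftBlocks]
  | succ k ih =>
    rw [List.ofFn_succ, List.ofFn_succ, List.flatten_cons, shiftBlocks,
      ← ih (fun i => W i.succ) (c + listMax (W 0))]
    congr 1
    · simp
    · simp only [sum_filter_lt_succ, add_assoc]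

lemma buildC_eq (k : ℕ) (W : Fin k → List ℕ) :
    buildC k W = altPrefix k ++ shiftBlocks 1 (List.ofFn W) := by
  rw [buildC, flatten_ofFn_map_add_eq_shiftBlocks, altPrefix]

lemma length_buildC {k : ℕ} {W : Fin k → List ℕ} (hW : ∀ h, (W h).length = k) :
    (buildC k W).length = k ^ 2 + 2 * k := by
  have hlen : (List.ofFn W).map List.length = List.replicate k k := by
    rw [List.map_ofFn, show List.length ∘ W = fun _ => k from funext hW, List.ofFn_const]
  rw [buildC_eq, List.length_append, length_altPrefix, length_shiftBlocks, hlen,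
    List.sum_replicate, smul_eq_mul, sq]
  omega

lemma buildC_injective {k : ℕ} {W W' : Fin k → List ℕ} (hW : ∀ h, (W h).length = k)
    (hW' : ∀ h, (W' h).length = k) (heq : buildC k W = buildC k W') : W = W' := by
  rw [buildC_eq, buildC_eq] at heq
  refine List.ofFn_injective (shiftBlocks_injective (m := k) _ _ 1 (by simp) ?_ ?_
    (List.append_cancel_left heq))
  · simpa [List.mem_ofFn] using hW
  · simpa [List.mem_ofFn] using hW'

lemma getD_le_asc_take_add_one_append_shiftBlocks (ws : List (List ℕ)) (u : List ℕ) (c : ℕ)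
    (hweak : ∀ w ∈ ws, IsWeakAscentSeq w) (hshift : ∀ w ∈ ws, listMax w + c ≤ asc u + 1) :
    ∀ i, u.length ≤ i → i < (u ++ shiftBlocks c ws).length →
      (u ++ shiftBlocks c ws).getD i 0 ≤ asc ((u ++ shiftBlocks c ws).take i) + 1 := by
  induction ws generalizing u c with
  | nil => intro i hi hlen; simp [shiftBlocks] at hlen; omega
  | cons w t ih =>
    intro i hi hlen
    have hassoc : u ++ shiftBlocks c (w :: t)
        = (u ++ w.map (· + c)) ++ shiftBlocks (c + listMax w) t := by
      rw [shiftBlocks, List.append_assoc]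
    rw [hassoc] at hlen ⊢
    by_cases hblock : i < (u ++ w.map (· + c)).length
    · have hmem : (u ++ w.map (· + c)).getD i 0 ∈ w.map (· + c) := by
        rw [List.getD_append_right _ _ _ _ hi]
        exact List.getD_mem (by simp only [List.length_append] at hblock; omega)
      obtain ⟨x, hx, hxval⟩ := List.mem_map.mp hmem
      rw [List.getD_append _ _ _ _ hblock, ← hxval, List.append_assoc]
      have := le_listMax hx
      have := hshift w List.mem_cons_self
      have := asc_le_asc_take_append (r := w.map (· + c) ++ shiftBlocks (c + listMax w) t) hi
      omega
    · refine ih _ _ (fun w' hw' => hweak w' (List.mem_cons_of_mem _ hw')) (fun w' hw' => ?_) i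
        (by omega) hlen
      have := hshift w' (List.mem_cons_of_mem _ hw')
      have := asc_add_asc_le_asc_append u (w.map (· + c))
      have := listMax_le (hweak w List.mem_cons_self)
      rw [asc_map_add] at *
      omega

lemma isAscentSeq_buildC {k : ℕ} (hk : 1 ≤ k) {W : Fin k → List ℕ}
    (hW : ∀ h, (W h).length = k ∧ IsWeakAscentSeq (W h)) : IsAscentSeq (buildC k W) := by
  rw [buildC_eq]
  have hprefix := length_altPrefix k
  refine ⟨fun _ => ?_, fun i _ hi => ?_⟩
  · obtain ⟨k, rfl⟩ := Nat.exists_eq_add_of_le' hk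
    rfl
  by_cases hsmall : i < (altPrefix k).length
  · rw [List.getD_append _ _ _ _ hsmall]
    have := le_one_of_mem_altPrefix (List.getD_mem (d := 0) hsmall)
    omega
  refine getD_le_asc_take_add_one_append_shiftBlocks _ _ _ ?_ ?_ i (not_lt.mp hsmall) hi
  · simpa [List.mem_ofFn] using fun h => (hW h).2
  · simp only [List.mem_ofFn, forall_exists_index, forall_apply_eq_imp_iff]
    intro h
    have hne : W h ≠ [] := List.ne_nil_of_length_pos (by rw [(hW h).1]; omega)
    have := (hW h).2.listMax_lt_length hne
    have := le_asc_altPrefix k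
    rw [(hW h).1] at *
    omega

lemma IsPattern.nodup {p : List ℕ} (hp : IsPattern p) : p.Nodup :=
  hp.nodup_iff.mpr List.nodup_range

lemma exists_cut_of_monotone {n m : ℕ} {idx : Fin n → ℕ} (hmono : Monotone idx)
    {a₀ b₀ : Fin n} (ha₀ : idx a₀ < m) (hb₀ : m ≤ idx b₀) :
    ∃ t, 0 < t ∧ t < n ∧ ∀ a : Fin n, a.val < t ↔ idx a < m := by
  classical
  have hex : ∃ t, ∃ ht : t < n, m ≤ idx ⟨t, ht⟩ := ⟨b₀, b₀.2, hb₀⟩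
  obtain ⟨htn, hmt⟩ := Nat.find_spec hex
  have hcut : ∀ a : Fin n, a.val < Nat.find hex ↔ idx a < m := by
    intro a
    constructor
    · exact fun ha => not_le.mp (not_exists.mp (Nat.find_min hex ha) a.2)
    · intro ha
      by_contra hle
      exact (hmt.trans (hmono (Fin.mk_le_of_le_val (not_lt.mp hle)))).not_gt ha
  have := (hcut a₀).mpr ha₀
  exact ⟨Nat.find hex, by omega, htn, hcut⟩

lemma SumIndecomposable.exists_inversion {p : List ℕ} (hsi : SumIndecomposable p)
    (hnd : p.Nodup) {t : ℕ} (ht₀ : 0 < t) (ht : t < p.length) :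
    ∃ a b : Fin p.length, a.val < t ∧ t ≤ b.val ∧ p.get b < p.get a := by
  by_contra! h
  refine hsi ⟨t, ht₀, ht, fun x hx y hy => ?_⟩
  obtain ⟨i, hi, rfl⟩ := List.mem_iff_getElem.mp hx
  obtain ⟨j, hj, rfl⟩ := List.mem_iff_getElem.mp hy
  simp only [List.length_take, List.length_drop] at hi hj
  rw [List.getElem_take, List.getElem_drop]
  have hle := h ⟨i, by omega⟩ ⟨t + j, by omega⟩ (by simp only; omega) (by simp only; omega)
  have hne : p[i] ≠ p[t + j] := fun heq => by
    have := (hnd.getElem_inj_iff).mp heq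
    omega
  exact lt_of_le_of_ne hle hne

lemma containsPattern_of_append_left {p u v : List ℕ} {idx : Fin p.length → ℕ}
    (hmono : StrictMono idx) (hlt : ∀ a, idx a < u.length)
    (hiso : ∀ a b, p.get a < p.get b ↔ (u ++ v).getD (idx a) 0 < (u ++ v).getD (idx b) 0) :
    ContainsPattern u p :=
  ⟨idx, hmono, hlt, fun a b => by
    rw [hiso a b, List.getD_append _ _ _ _ (hlt a), List.getD_append _ _ _ _ (hlt b)]⟩

lemma containsPattern_of_append_right {p u v : List ℕ} {idx : Fin p.length → ℕ}
    (hmono : StrictMono idx) (hlt : ∀ a, idx a < (u ++ v).length)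
    (hge : ∀ a, u.length ≤ idx a)
    (hiso : ∀ a b, p.get a < p.get b ↔ (u ++ v).getD (idx a) 0 < (u ++ v).getD (idx b) 0) :
    ContainsPattern v p := by
  refine ⟨fun a => idx a - u.length, fun a b hab => ?_, fun a => ?_, fun a b => ?_⟩
  · have := hmono hab
    have := hge a
    dsimp only
    omega
  · have := hge a
    have := hlt a
    rw [List.length_append] at this
    dsimp only
    omega
  · rw [hiso a b, List.getD_append_right _ _ _ _ (hge a), List.getD_append_right _ _ _ _ (hge b)]

lemma AvoidsPattern.append {p u v : List ℕ} (hu : AvoidsPattern u p) (hv : AvoidsPattern v p)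
    (hnd : p.Nodup) (hsi : SumIndecomposable p) (hle : ∀ x ∈ u, ∀ y ∈ v, x ≤ y) :
    AvoidsPattern (u ++ v) p := by
  rintro ⟨idx, hmono, hlt, hiso⟩
  by_cases hleft : ∀ a, idx a < u.length
  · exact hu (containsPattern_of_append_left hmono hleft hiso)
  by_cases hright : ∀ a, u.length ≤ idx a
  · exact hv (containsPattern_of_append_right hmono hlt hright hiso)
  push Not at hleft hright
  obtain ⟨b₀, hb₀⟩ := hleft
  obtain ⟨a₀, ha₀⟩ := hright
  obtain ⟨t, ht₀, ht, hcut⟩ := exists_cut_of_monotone hmono.monotone ha₀ hb₀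
  obtain ⟨a, b, hat, hbt, hba⟩ := hsi.exists_inversion hnd ht₀ ht
  have hau : idx a < u.length := (hcut a).mp hat
  have hbu : u.length ≤ idx b := not_lt.mp fun h => by have := (hcut b).mpr h; omega
  have hbv : idx b - u.length < v.length := by
    have := hlt b
    rw [List.length_append] at this
    omega
  have hval : (u ++ v).getD (idx a) 0 ≤ (u ++ v).getD (idx b) 0 := by
    rw [List.getD_append _ _ _ _ hau, List.getD_append_right _ _ _ _ hbu]
    exact hle _ (List.getD_mem hau) _ (List.getD_mem hbv)
  exact ((hiso b a).mp hba).not_ge hval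

lemma AvoidsPattern.map_add {p w : List ℕ} (hw : AvoidsPattern w p) (c : ℕ) :
    AvoidsPattern (w.map (· + c)) p := by
  rintro ⟨idx, hmono, hlt, hiso⟩
  have hget : ∀ a, (w.map (· + c)).getD (idx a) 0 = w.getD (idx a) 0 + c := fun a => by
    have h := hlt a
    rw [List.getD_eq_getElem _ _ h, List.getElem_map,
      List.getD_eq_getElem _ _ (by simpa using h)]
  refine hw ⟨idx, hmono, fun a => by simpa using hlt a, fun a b => ?_⟩
  rw [hiso a b, hget a, hget b]
  omega

lemma avoidsPattern_shiftBlocks {p : List ℕ} (hp₀ : 0 < p.length) (hnd : p.Nodup)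
    (hsi : SumIndecomposable p) (ws : List (List ℕ)) (c : ℕ)
    (h : ∀ w ∈ ws, AvoidsPattern w p) : AvoidsPattern (shiftBlocks c ws) p := by
  induction ws generalizing c with
  | nil =>
    rintro ⟨idx, -, hlt, -⟩
    exact absurd (hlt ⟨0, hp₀⟩) (by simp [shiftBlocks])
  | cons w t ih =>
    refine AvoidsPattern.append ((h w List.mem_cons_self).map_add c)
      (ih _ fun w' hw' => h w' (List.mem_cons_of_mem _ hw')) hnd hsi fun x hx y hy => ?_
    obtain ⟨x', hx', rfl⟩ := List.mem_map.mp hx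
    have := le_listMax hx'
    have := le_of_mem_shiftBlocks hy
    omega

lemma avoidsPattern_of_forall_le_one {p s : List ℕ} (hp : IsPattern p) (hp3 : 3 ≤ p.length)
    (hs : ∀ x ∈ s, x ≤ 1) : AvoidsPattern s p := by
  rintro ⟨idx, -, hlt, hiso⟩
  have hmem : ∀ m < p.length, ∃ a : Fin p.length, p.get a = m := fun m hm => by
    obtain ⟨i, hi, h⟩ := List.mem_iff_getElem.mp (hp.mem_iff.mpr (List.mem_range.mpr hm))
    exact ⟨⟨i, hi⟩, h⟩
  obtain ⟨a₀, h₀⟩ := hmem 0 (by omega)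
  obtain ⟨a₁, h₁⟩ := hmem 1 (by omega)
  obtain ⟨a₂, h₂⟩ := hmem 2 (by omega)
  have h01 := (hiso a₀ a₁).mp (by omega)
  have h12 := (hiso a₁ a₂).mp (by omega)
  have := hs _ (List.getD_mem (d := 0) (hlt a₂))
  omega

lemma avoidsPattern_buildC {p : List ℕ} (hp : IsPattern p) (hp3 : 3 ≤ p.length)
    (hsi : SumIndecomposable p) {k : ℕ} {W : Fin k → List ℕ}
    (hW : ∀ h, AvoidsPattern (W h) p) :
    AvoidsPattern (buildC k W) p := by
  rw [buildC_eq]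
  refine AvoidsPattern.append
    (avoidsPattern_of_forall_le_one hp hp3 fun _ => le_one_of_mem_altPrefix)
    (avoidsPattern_shiftBlocks (by omega) hp.nodup hsi _ _ ?_) hp.nodup hsi
    fun x hx y hy => (le_one_of_mem_altPrefix hx).trans (le_of_mem_shiftBlocks hy)
  simpa [List.mem_ofFn] using hW

lemma IsAscentSeq.le_length {s : List ℕ} (hs : IsAscentSeq s) : ∀ x ∈ s, x ≤ s.length := by
  intro x hx
  obtain ⟨i, hi, rfl⟩ := List.mem_iff_getElem.mp hx
  rcases Nat.eq_zero_or_pos i with rfl | hpos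
  · have := hs.1 (by omega)
    rw [List.getD_eq_getElem _ _ hi] at this
    omega
  · have := hs.2 i hpos hi
    rw [List.getD_eq_getElem _ _ hi] at this
    have := asc_take_le s i
    omega

lemma finite_setOf_length_eq_forall_le (n B : ℕ) :
    {s : List ℕ | s.length = n ∧ ∀ x ∈ s, x ≤ B}.Finite := by
  refine (Set.finite_range fun f : Fin n → Fin (B + 1) =>
    List.ofFn fun i => (f i : ℕ)).subset ?_
  rintro s ⟨rfl, hs⟩
  exact ⟨fun i => ⟨s[i], Nat.lt_succ_of_le (hs _ (List.getElem_mem _))⟩, List.ofFn_getElem⟩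

lemma ncard_pow_le_ncard_of_injective {α β : Type*} {A : Set α} {B : Set β} (hB : B.Finite)
    {k : ℕ} (f : (Fin k → α) → β) (hf : ∀ W, (∀ h, W h ∈ A) → f W ∈ B)
    (hinj : ∀ W W', (∀ h, W h ∈ A) → (∀ h, W' h ∈ A) → f W = f W' → W = W') :
    A.ncard ^ k ≤ B.ncard := by
  have := hB.to_subtype
  let Φ : (Fin k → A) → B := fun W => ⟨f fun h => W h, hf _ fun h => (W h).2⟩
  have hΦ : Function.Injective Φ := fun W W' hWW => funext fun h => Subtype.ext <|
    congrFun (hinj _ _ (fun h => (W h).2) (fun h => (W' h).2) (congrArg Subtype.val hWW)) h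
  calc A.ncard ^ k = Nat.card (Fin k → A) := by
        rw [Nat.card_fun, Nat.card_fin, Nat.card_coe_set_eq]
    _ ≤ Nat.card B := Nat.card_le_card_of_injective Φ hΦ
    _ = B.ncard := Nat.card_coe_set_eq B

/-- `c_{k²+2k} ≥ w_k ^ k`. -/
theorem stmt3 (p : List ℕ) (hp : IsPattern p) (hp3 : 3 ≤ p.length)
    (hsi : SumIndecomposable p) (k : ℕ) (hk : 1 ≤ k) :
    weakAvoidCount p k ^ k ≤ ascentAvoidCount p (k ^ 2 + 2 * k) := by
  have hfinite :
      {s : List ℕ | s.length = k ^ 2 + 2 * k ∧ IsAscentSeq s ∧ AvoidsPattern s p}.Finite :=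
    (finite_setOf_length_eq_forall_le _ (k ^ 2 + 2 * k)).subset
      fun s ⟨hlen, hs, _⟩ => ⟨hlen, hlen ▸ hs.le_length⟩
  refine ncard_pow_le_ncard_of_injective hfinite (buildC k) (fun W hW => ?_)
    fun W W' hW hW' => buildC_injective (fun h => (hW h).1) (fun h => (hW' h).1)
  exact ⟨length_buildC fun h => (hW h).1, isAscentSeq_buildC hk fun h => ⟨(hW h).1, (hW h).2.1⟩,
    avoidsPattern_buildC hp hp3 hsi fun h => (hW h).2.2⟩
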